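/- For every z ∈ ℂ ∖ ℝ_{≥0} one has log(1−z) − log(1−1/z) = log(−z), where log denotes the principal branch of the complex logarithm (branch cut along (−∞,0]). Equivalently, −Li_1(z) + Li_1(1/z) = 𝓑_1(z), i.e., the weight-one case of the explicit parity theorem. -/

import Mathlib

/-!
With `w = -z` in the slit plane, `1 + w = w * (1 + w⁻¹)`, and `Im (1 + w⁻¹) = -Im w / |w|²` has the
sign opposite to `Im w`. Hence `arg w + arg (1 + w⁻¹)` stays in `(-π, π)`, so the principal
logarithm is additive on this product.
-/

/-- `ℝ_{≥0}` viewed inside `ℂ`. -/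
def nnRealC : Set ℂ := {w | ∃ r : ℝ, 0 ≤ r ∧ w = (r : ℂ)}

open Complex Real Set
open scoped ComplexOrder

lemma mem_nnRealC_iff {z : ℂ} : z ∈ nnRealC ↔ 0 ≤ z := by
  refine ⟨?_, fun h => ⟨z.re, (nonneg_iff.1 h).1, ?_⟩⟩
  · rintro ⟨r, hr, rfl⟩
    exact_mod_cast hr
  · exact ext rfl (nonneg_iff.1 h).2.symm

lemma neg_mem_slitPlane_iff_notMem_nnRealC {z : ℂ} : -z ∈ slitPlane ↔ z ∉ nnRealC := by
  rw [mem_slitPlane_iff_not_le_zero, neg_nonpos, mem_nnRealC_iff]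

namespace Complex

lemma one_add_mem_slitPlane {w : ℂ} (hw : w ∈ slitPlane) : 1 + w ∈ slitPlane := by
  rw [mem_slitPlane_iff] at hw ⊢
  simp only [add_re, one_re, add_im, one_im, zero_add]
  rcases hw with hre | him
  · exact Or.inl (by linarith)
  · exact Or.inr him

lemma inv_mem_slitPlane {w : ℂ} (hw : w ∈ slitPlane) : w⁻¹ ∈ slitPlane := by
  have hw0 : 0 < normSq w := normSq_pos.2 (slitPlane_ne_zero hw)
  rw [mem_slitPlane_iff] at hw ⊢
  rw [inv_re, inv_im]
  rcases hw with hre | him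
  · exact Or.inl (div_pos hre hw0)
  · exact Or.inr (div_ne_zero (neg_ne_zero.2 him) hw0.ne')

lemma arg_nonpos_of_im_nonpos {z : ℂ} (hz : z ∈ slitPlane) (him : z.im ≤ 0) : arg z ≤ 0 := by
  rcases him.lt_or_eq with hneg | hzero
  · exact (arg_neg_iff.2 hneg).le
  · have hre : 0 < z.re := by simpa [mem_slitPlane_iff, hzero] using hz
    exact (arg_eq_zero_iff.2 ⟨hre.le, hzero⟩).le

lemma arg_add_arg_mem_Ioo_of_im_mul_im_nonpos {a b : ℂ} (ha : a ∈ slitPlane)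
    (hb : b ∈ slitPlane) (hab : a.im * b.im ≤ 0) : arg a + arg b ∈ Ioo (-π) π := by
  wlog hsign : 0 ≤ a.im ∧ b.im ≤ 0 generalizing a b
  · have hsign' : 0 ≤ b.im ∧ a.im ≤ 0 := by
      rcases mul_nonpos_iff.1 hab with h | h
      · exact absurd h hsign
      · exact h.symm
    rw [add_comm]
    exact this hb ha (by rwa [mul_comm]) hsign'
  have ha_lt : arg a < π := lt_of_le_of_ne (arg_le_pi a) (slitPlane_arg_ne_pi ha)
  have ha_nonneg : 0 ≤ arg a := arg_nonneg_iff.2 hsign.1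
  have hb_nonpos : arg b ≤ 0 := arg_nonpos_of_im_nonpos hb hsign.2
  constructor <;> linarith [neg_pi_lt_arg b]

lemma log_mul_of_im_mul_im_nonpos {a b : ℂ} (ha : a ∈ slitPlane) (hb : b ∈ slitPlane)
    (hab : a.im * b.im ≤ 0) : log (a * b) = log a + log b :=
  log_mul (slitPlane_ne_zero ha) (slitPlane_ne_zero hb)
    (Ioo_subset_Ioc_self (arg_add_arg_mem_Ioo_of_im_mul_im_nonpos ha hb hab))

lemma log_one_add_eq_log_add_log_one_add_inv {w : ℂ} (hw : w ∈ slitPlane) :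
    log (1 + w) = log w + log (1 + w⁻¹) := by
  have hw0 : w ≠ 0 := slitPlane_ne_zero hw
  have hfactor : 1 + w = w * (1 + w⁻¹) := by field_simp; ring
  have him : w.im * (1 + w⁻¹).im = -(w.im ^ 2 / normSq w) := by
    simp only [add_im, one_im, inv_im, zero_add]
    ring
  rw [hfactor, log_mul_of_im_mul_im_nonpos hw (one_add_mem_slitPlane (inv_mem_slitPlane hw))]
  rw [him, neg_nonpos]
  exact div_nonneg (sq_nonneg _) (normSq_nonneg w)

end Complex

/-- Weight-one case of the explicit parity theorem:
for `z ∈ ℂ ∖ ℝ_{≥0}`, `log(1-z) - log(1-1/z) = log(-z)`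
(principal branch), i.e. `-Li₁(z) + Li₁(1/z) = 𝓑₁(z)`. -/
theorem log_one_sub_sub_log_one_sub_inv (z : ℂ) (hz : z ∉ nnRealC) :
    Complex.log (1 - z) - Complex.log (1 - z⁻¹) = Complex.log (-z) := by
  have h := log_one_add_eq_log_add_log_one_add_inv (neg_mem_slitPlane_iff_notMem_nnRealC.2 hz)
  rw [inv_neg, ← sub_eq_add_neg, ← sub_eq_add_neg] at h
  rw [h, add_sub_cancel_right]
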